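/- arXiv:2406.04020 — 2 statements merged into one kernel-verified Lean document; each statement's English description precedes it below -/
import Mathlib

section
/- For any graph G without isolated vertices, ρ_e^o(K_2 ∘ G) = α(G), where K_2 ∘ G denotes the lexicographic product. -/
open SimpleGraph

/-- An edge open packing (EOP) set: a set `B` of edges of `G` such that no edge of `G`
(other than the two edges themselves) joins an endvertex of one edge of `B` to an
endvertex of another edge of `B`. -/
def IsEOPSet {V : Type*} (G : SimpleGraph V) (B : Set (Sym2 V)) : Prop :=
  B ⊆ G.edgeSet ∧ ∀ e₁ ∈ B, ∀ e₂ ∈ B, e₁ ≠ e₂ →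
    ∀ x ∈ e₁, ∀ y ∈ e₂, G.Adj x y → s(x, y) = e₁ ∨ s(x, y) = e₂

/-- An induced matching: a set `M` of edges of `G` such that no edge of `G` joins an
endvertex of one edge of `M` to an endvertex of another edge of `M` (this in particular
forces `M` to be a matching). -/
def IsInducedMatching {V : Type*} (G : SimpleGraph V) (M : Set (Sym2 V)) : Prop :=
  M ⊆ G.edgeSet ∧ ∀ e₁ ∈ M, ∀ e₂ ∈ M, e₁ ≠ e₂ →
    ∀ x ∈ e₁, ∀ y ∈ e₂, ¬ G.Adj x y

/-- The edge open packing number `ρₑᵒ(G)`. -/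
noncomputable def eopNum {V : Type*} (G : SimpleGraph V) : ℕ :=
  sSup {n | ∃ B : Finset (Sym2 V), IsEOPSet G ↑B ∧ B.card = n}

/-- The induced matching number `ν_I(G)`. -/
noncomputable def inducedMatchingNum {V : Type*} (G : SimpleGraph V) : ℕ :=
  sSup {n | ∃ M : Finset (Sym2 V), IsInducedMatching G ↑M ∧ M.card = n}

/-- The independence number `α(G)`. -/
noncomputable def indepNum {V : Type*} (G : SimpleGraph V) : ℕ :=
  sSup {n | ∃ S : Finset V, (∀ x ∈ S, ∀ y ∈ S, ¬ G.Adj x y) ∧ S.card = n}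

/-- The open packing number `ρᵒ(G)`: maximum size of a set of vertices whose open
neighborhoods are pairwise disjoint. -/
noncomputable def openPackNum {V : Type*} (G : SimpleGraph V) : ℕ :=
  sSup {n | ∃ P : Finset V,
    (∀ x ∈ P, ∀ y ∈ P, x ≠ y → ∀ z, ¬ (G.Adj x z ∧ G.Adj y z)) ∧ P.card = n}

/-- The 2-packing number `ρ₂(G)`: maximum size of a set of vertices pairwise at
distance greater than 2. -/
noncomputable def twoPackNum {V : Type*} (G : SimpleGraph V) : ℕ :=
  sSup {n | ∃ P : Finset V,
    (∀ x ∈ P, ∀ y ∈ P, x ≠ y →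
      ¬ G.Adj x y ∧ (∀ z, ¬ (G.Adj x z ∧ G.Adj z y))) ∧ P.card = n}

/-- The 3-packing number `ρ₃(G)`: maximum size of a set of vertices pairwise at
distance greater than 3. -/
noncomputable def threePackNum {V : Type*} (G : SimpleGraph V) : ℕ :=
  sSup {n | ∃ P : Finset V,
    (∀ x ∈ P, ∀ y ∈ P, x ≠ y →
      ¬ G.Adj x y ∧ (∀ z, ¬ (G.Adj x z ∧ G.Adj z y)) ∧
      (∀ z w, ¬ (G.Adj x z ∧ G.Adj z w ∧ G.Adj w y))) ∧ P.card = n}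

/-- Minimum degree of `G` (degrees measured via `Set.ncard` of neighborhoods). -/
noncomputable def minDeg {V : Type*} (G : SimpleGraph V) : ℕ :=
  sInf {d | ∃ v, d = (G.neighborSet v).ncard}

/-- The lexicographic product `G ∘ H`. -/
def lexProd {V W : Type*} (G : SimpleGraph V) (H : SimpleGraph W) :
    SimpleGraph (V × W) where
  Adj x y := G.Adj x.1 y.1 ∨ (x.1 = y.1 ∧ H.Adj x.2 y.2)
  symm := by
    constructor
    rintro ⟨g, h⟩ ⟨g', h'⟩ (hgg | ⟨rfl, hh⟩)
    · exact Or.inl hgg.symm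
    · exact Or.inr ⟨rfl, hh.symm⟩
  loopless := by
    constructor
    rintro ⟨g, h⟩ (hgg | ⟨-, hh⟩)
    · exact G.loopless.irrefl g hgg
    · exact H.loopless.irrefl h hh

/-- The direct (tensor) product `G × H`. -/
def tensorProd {V W : Type*} (G : SimpleGraph V) (H : SimpleGraph W) :
    SimpleGraph (V × W) where
  Adj x y := G.Adj x.1 y.1 ∧ H.Adj x.2 y.2
  symm := by constructor; rintro ⟨g, h⟩ ⟨g', h'⟩ ⟨h1, h2⟩; exact ⟨h1.symm, h2.symm⟩
  loopless := by constructor; rintro ⟨g, h⟩ ⟨h1, -⟩; exact G.loopless.irrefl g h1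

/-- The strong product `G ⊠ H`. -/
def strongProd {V W : Type*} (G : SimpleGraph V) (H : SimpleGraph W) :
    SimpleGraph (V × W) where
  Adj x y := x ≠ y ∧ (x.1 = y.1 ∨ G.Adj x.1 y.1) ∧ (x.2 = y.2 ∨ H.Adj x.2 y.2)
  symm := by
    constructor
    rintro x y ⟨hne, h1, h2⟩
    exact ⟨hne.symm, h1.imp Eq.symm (fun h => h.symm), h2.imp Eq.symm (fun h => h.symm)⟩
  loopless := by constructor; rintro x ⟨hne, -, -⟩; exact hne rfl

/-- The star `K_{1,r}` with center `none` and leaves `some i`. -/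
def starGraph (r : ℕ) : SimpleGraph (Option (Fin r)) :=
  SimpleGraph.fromRel (fun x _ => x = none)

/-- The spider `S^k`: obtained from `K_{1,k}` by subdividing every edge exactly once.
The center is `none`, `some (i, false)` are the support vertices and `some (i, true)`
the leaves. -/
def spiderGraph (k : ℕ) : SimpleGraph (Option (Fin k × Bool)) :=
  SimpleGraph.fromRel (fun x y =>
    (x = none ∧ ∃ i, y = some (i, false)) ∨
    (∃ i, x = some (i, false) ∧ y = some (i, true)))

/-- The `n`-dimensional hypercube `Q_n`: vertices are `Fin n → Bool`, adjacent iff they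
differ in exactly one coordinate. -/
def hypercube (n : ℕ) : SimpleGraph (Fin n → Bool) :=
  SimpleGraph.fromRel (fun x y =>
    (Finset.univ.filter (fun i => x i ≠ y i)).card = 1)

/-- The corona product `G ⊙ H`: vertices `(v, none)` form a copy of `G`, vertices
`(v, some h)` form a copy of `H` for each `v`, and `(v, none)` is joined to every
vertex of its copy of `H`. -/
def corona {V W : Type*} (G : SimpleGraph V) (H : SimpleGraph W) :
    SimpleGraph (V × Option W) :=
  SimpleGraph.fromRel (fun x y =>
    (x.2 = none ∧ y.2 = none ∧ G.Adj x.1 y.1) ∨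
    (x.1 = y.1 ∧ ∃ h h', x.2 = some h ∧ y.2 = some h' ∧ H.Adj h h') ∨
    (x.1 = y.1 ∧ x.2 = none ∧ ∃ h, y.2 = some h))

/-- The set of endvertices of the edges of `B`. -/
def supportSet {V : Type*} (B : Set (Sym2 V)) : Set V := {v | ∃ e ∈ B, v ∈ e}


/-!
Each edge of an edge open packing `B` has an endvertex lying on no other edge of `B`: if both
ends `a`, `b` of `e` were shared, the edge `ab = e` itself would join two other edges of `B`.
These private endvertices form an independent set of size `|B|`. In `K₂ ∘ G` an independent set
lies in one layer, so it is an independent set of `G`. Conversely, for an independent set `S`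
of `G` and `v ∈ S`, the star joining `(0, v)` to the vertices `(1, s)`, `s ∈ S`, is an edge open
packing of `K₂ ∘ G`. So packings of `K₂ ∘ G` and independent sets of `G` attain exactly the same
sizes.
-/

namespace IsEOPSet

variable {V : Type*} {G : SimpleGraph V}

theorem exists_private_mem {B : Set (Sym2 V)} (hB : IsEOPSet G B) {e : Sym2 V} (he : e ∈ B) :
    ∃ x ∈ e, ∀ e' ∈ B, x ∈ e' → e' = e := by
  induction e using Sym2.ind with
  | h a b =>
    have hab : G.Adj a b := hB.1 he
    by_contra! hshared
    obtain ⟨e₁, he₁, ha₁, hne₁⟩ := hshared a (Sym2.mem_mk_left a b)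
    obtain ⟨e₂, he₂, hb₂, hne₂⟩ := hshared b (Sym2.mem_mk_right a b)
    by_cases h₁₂ : e₁ = e₂
    · subst h₁₂
      exact hne₁ ((Sym2.mem_and_mem_iff hab.ne).mp ⟨ha₁, hb₂⟩)
    · rcases hB.2 e₁ he₁ e₂ he₂ h₁₂ a ha₁ b hb₂ hab with h | h
      · exact hne₁ h.symm
      · exact hne₂ h.symm

theorem exists_indep_card_eq {B : Finset (Sym2 V)} (hB : IsEOPSet G ↑B) :
    ∃ S : Finset V, (∀ x ∈ S, ∀ y ∈ S, ¬ G.Adj x y) ∧ S.card = B.card := by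
  classical
  choose f hf_mem hf_private using fun e (he : e ∈ B) => hB.exists_private_mem he
  have hf_inj : Function.Injective fun e : B => f e e.2 := by
    rintro ⟨e, he⟩ ⟨e', he'⟩ (hee' : f e he = f e' he')
    exact Subtype.ext (hf_private e he e' he' (by rw [hee']; exact hf_mem e' he')).symm
  refine ⟨B.attach.image fun e : B => f e e.2, ?_, (Finset.card_image_of_injective _ hf_inj).trans
    B.card_attach⟩
  simp only [Finset.mem_image]
  rintro _ ⟨⟨e, he⟩, -, rfl⟩ _ ⟨⟨e', he'⟩, -, rfl⟩ hadj
  have hne : e ≠ e' := by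
    rintro rfl
    exact G.irrefl hadj
  rcases hB.2 e he e' he' hne _ (hf_mem e he) _ (hf_mem e' he') hadj with h | h
  · exact hne (hf_private e' he' e he (h ▸ Sym2.mem_mk_right _ _))
  · exact hne (hf_private e he e' he' (h ▸ Sym2.mem_mk_left _ _)).symm

end IsEOPSet

section LexProd

variable {α W : Type*} {H : SimpleGraph W}

theorem exists_indep_card_eq_of_lexProd_top {S : Finset (α × W)}
    (hS : ∀ x ∈ S, ∀ y ∈ S, ¬ (lexProd ⊤ H).Adj x y) :
    ∃ T : Finset W, (∀ x ∈ T, ∀ y ∈ T, ¬ H.Adj x y) ∧ T.card = S.card := by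
  classical
  have same_layer : ∀ x ∈ S, ∀ y ∈ S, x.1 = y.1 := fun x hx y hy =>
    not_not.mp fun hne => hS x hx y hy (Or.inl ((top_adj _ _).mpr hne))
  refine ⟨S.image Prod.snd, ?_, Finset.card_image_of_injOn ?_⟩
  · simp only [Finset.mem_image]
    rintro _ ⟨x, hx, rfl⟩ _ ⟨y, hy, rfl⟩ hadj
    exact hS x hx y hy (Or.inr ⟨same_layer x hx y hy, hadj⟩)
  · intro x hx y hy hxy
    exact Prod.ext (same_layer x hx y hy) hxy

theorem isEOPSet_lexProd_star [DecidableEq α] [DecidableEq W] {G : SimpleGraph α} {a b : α}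
    (hab : G.Adj a b) (v : W) {S : Finset W} (hS : ∀ x ∈ S, ∀ y ∈ S, ¬ H.Adj x y) :
    IsEOPSet (lexProd G H) ↑(S.image fun w => s((a, v), (b, w))) := by
  simp only [IsEOPSet, Finset.coe_image]
  refine ⟨?_, ?_⟩
  · rintro _ ⟨w, -, rfl⟩
    exact Or.inl hab
  rintro _ ⟨w, hw, rfl⟩ _ ⟨w', hw', rfl⟩ - x hx y hy hxy
  rcases Sym2.mem_iff.mp hx with rfl | rfl <;> rcases Sym2.mem_iff.mp hy with rfl | rfl
  · exact absurd hxy (lexProd G H).irrefl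
  · exact Or.inr rfl
  · exact Or.inl Sym2.eq_swap
  · rcases hxy with hbb | ⟨-, hww'⟩
    · exact absurd hbb G.irrefl
    · exact absurd hww' (hS w hw w' hw')

theorem card_image_lexProd_star [DecidableEq α] [DecidableEq W] (a b : α) (v : W)
    (S : Finset W) : (S.image fun w => s((a, v), (b, w))).card = S.card :=
  Finset.card_image_of_injective S fun _ _ h => Prod.mk_right_injective b (Sym2.congr_right.mp h)

end LexProd

theorem stmt_8_general {V : Type*} (G : SimpleGraph V) :
    eopNum (lexProd (⊤ : SimpleGraph (Fin 2)) G) = _root_.indepNum G := by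
  classical
  unfold eopNum _root_.indepNum
  congr 1
  ext n
  constructor
  · rintro ⟨B, hB, rfl⟩
    obtain ⟨S, hS, hSB⟩ := hB.exists_indep_card_eq
    obtain ⟨T, hT, hTS⟩ := exists_indep_card_eq_of_lexProd_top hS
    exact ⟨T, hT, hTS.trans hSB⟩
  · rintro ⟨S, hS, rfl⟩
    rcases S.eq_empty_or_nonempty with rfl | ⟨v, -⟩
    · exact ⟨∅, by simp [IsEOPSet], rfl⟩
    · have h01 : (⊤ : SimpleGraph (Fin 2)).Adj 0 1 := by simp
      exact ⟨_, isEOPSet_lexProd_star h01 v hS, card_image_lexProd_star 0 1 v S⟩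

/-- For any graph `G` without isolated vertices, `ρₑᵒ(K₂ ∘ G) = α(G)`. -/
theorem stmt_8 {V : Type*} [Fintype V] (G : SimpleGraph V)
    (h : ∀ v : V, ∃ w, G.Adj v w) :
    eopNum (lexProd (⊤ : SimpleGraph (Fin 2)) G) = _root_.indepNum G :=
  stmt_8_general G
end

section
/- If G is a bipartite graph, then ρ_e^o(G) ≥ δ(G)·ρ_3(G), where ρ_3(G) is the maximum size of a set of vertices pairwise at distance greater than 3. -/
open SimpleGraph

/-!
Take a maximum 3-packing `P` and, at every `v ∈ P`, a star of `δ(G)` edges centred at `v`.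
Two stars with distinct centres are at distance at least 2 from each other, because the centres
are at distance at least 4, so no edge joins them. Inside one star an edge between two leaves
would close a triangle, which a bipartite graph does not have. Hence the union of the stars is an
edge open packing with `δ(G)·ρ₃(G)` edges.
-/

section

variable {V : Type*} (G : SimpleGraph V)

def IsThreePacking (P : Set V) : Prop :=
  ∀ x ∈ P, ∀ y ∈ P, x ≠ y →
    ¬ G.Adj x y ∧ (∀ z, ¬ (G.Adj x z ∧ G.Adj z y)) ∧
    (∀ z w, ¬ (G.Adj x z ∧ G.Adj z w ∧ G.Adj w y))

variable {G}

theorem IsThreePacking.isIndepSet {P : Set V} (hP : IsThreePacking G P) : G.IsIndepSet P :=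
  fun _ hv _ hw hvw => (hP _ hv _ hw hvw).1

theorem IsThreePacking.not_adj {P : Set V} (hP : IsThreePacking G P) {v w : V} (hv : v ∈ P)
    (hw : w ∈ P) (hvw : v ≠ w) {x y : V} (hx : x = v ∨ G.Adj v x) (hy : y = w ∨ G.Adj w y) :
    ¬ G.Adj x y := by
  obtain ⟨hvw₁, hvw₂, hvw₃⟩ := hP v hv w hw hvw
  rcases hx with rfl | hvx <;> rcases hy with rfl | hwy <;> intro hxy
  · exact hvw₁ hxy
  · exact hvw₂ y ⟨hxy, hwy.symm⟩
  · exact hvw₂ x ⟨hvx, hxy⟩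
  · exact hvw₃ x y ⟨hvx, hxy, hwy.symm⟩

variable (G)

theorem exists_isThreePacking_card_eq_threePackNum [Finite V] :
    ∃ P : Finset V, IsThreePacking G ↑P ∧ P.card = threePackNum G := by
  have := Fintype.ofFinite V
  show threePackNum G ∈ {n | ∃ P : Finset V, IsThreePacking G ↑P ∧ P.card = n}
  exact Nat.sSup_mem ⟨0, ∅, by simp [IsThreePacking], rfl⟩
    ⟨Fintype.card V, by rintro n ⟨P, -, rfl⟩; exact P.card_le_univ⟩

variable {G}

theorem IsEOPSet.card_le_eopNum [Finite V] {B : Finset (Sym2 V)} (hB : IsEOPSet G ↑B) :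
    B.card ≤ eopNum G := by
  classical
  have := Fintype.ofFinite V
  exact le_csSup ⟨Fintype.card (Sym2 V), by rintro n ⟨B', -, rfl⟩; exact B'.card_le_univ⟩
    ⟨B, hB, rfl⟩

theorem minDeg_le_degree (v : V) [Fintype (G.neighborSet v)] : minDeg G ≤ G.degree v := by
  rw [← card_neighborSet_eq_degree, ← Nat.card_eq_fintype_card, Nat.card_coe_set_eq]
  exact Nat.sInf_le ⟨v, rfl⟩

theorem cliqueFree_three_of_bool_coloring {c : V → Bool}
    (hc : ∀ x y, G.Adj x y → c x ≠ c y) : G.CliqueFree 3 :=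
  (Coloring.mk c fun h => hc _ _ h).colorable.cliqueFree (by simp)

variable [DecidableEq V]

def starEdges (P : Finset V) (N : V → Finset V) : Finset (Sym2 V) :=
  P.biUnion fun v => (N v).image (s(v, ·))

theorem mem_starEdges {P : Finset V} {N : V → Finset V} {e : Sym2 V} :
    e ∈ starEdges P N ↔ ∃ v ∈ P, ∃ a ∈ N v, s(v, a) = e := by
  simp [starEdges]

variable {P : Finset V} {N : V → Finset V}

theorem card_starEdges (hP : G.IsIndepSet ↑P) (hN : ∀ v, ∀ a ∈ N v, G.Adj v a) :
    (starEdges P N).card = ∑ v ∈ P, (N v).card := by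
  rw [starEdges, Finset.card_biUnion]
  · exact Finset.sum_congr rfl fun v _ =>
      Finset.card_image_of_injective _ fun _ _ h => Sym2.congr_right.1 h
  · intro v hv w hw hvw
    refine Finset.disjoint_left.2 fun e hev hew => ?_
    obtain ⟨a, ha, rfl⟩ := Finset.mem_image.1 hev
    obtain ⟨b, -, hwb⟩ := Finset.mem_image.1 hew
    rcases Sym2.eq_iff.1 hwb with ⟨hwv, -⟩ | ⟨hwa, -⟩
    · exact hvw hwv.symm
    · exact hP hv hw hvw (hwa ▸ hN v a ha)

theorem isEOPSet_starEdges (hG : G.CliqueFree 3) (hP : IsThreePacking G ↑P)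
    (hN : ∀ v, ∀ a ∈ N v, G.Adj v a) : IsEOPSet G ↑(starEdges P N) := by
  refine ⟨fun e he => ?_, fun e₁ he₁ e₂ he₂ hne x hx y hy hxy => ?_⟩
  · obtain ⟨v, -, a, ha, rfl⟩ := mem_starEdges.1 he
    exact hN v a ha
  obtain ⟨v, hv, a, ha, rfl⟩ := mem_starEdges.1 he₁
  obtain ⟨w, hw, b, hb, rfl⟩ := mem_starEdges.1 he₂
  have hva := hN v a ha
  have hwb := hN w b hb
  rw [Sym2.mem_iff] at hx hy
  by_cases hvw : v = w
  · subst hvw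
    rcases hx with rfl | rfl <;> rcases hy with rfl | rfl
    · exact absurd hxy G.irrefl
    · exact Or.inr rfl
    · exact Or.inl Sym2.eq_swap
    · exact absurd (is3Clique_triple_iff.2 ⟨hva, hwb, hxy⟩) (hG _)
  · exact absurd hxy <| hP.not_adj hv hw hvw (hx.imp_right fun h : x = a => h ▸ hva)
      (hy.imp_right fun h : y = b => h ▸ hwb)

end

/-- If `G` is bipartite, then `ρₑᵒ(G) ≥ δ(G)·ρ₃(G)`. -/
theorem stmt_16 {V : Type*} [Fintype V] (G : SimpleGraph V)
    (hbip : ∃ c : V → Bool, ∀ x y, G.Adj x y → c x ≠ c y) :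
    minDeg G * threePackNum G ≤ eopNum G := by
  classical
  obtain ⟨c, hc⟩ := hbip
  obtain ⟨P, hP, hPcard⟩ := exists_isThreePacking_card_eq_threePackNum G
  choose N hNsub hNcard using fun v => Finset.exists_subset_card_eq (minDeg_le_degree (G := G) v)
  have hN : ∀ v, ∀ a ∈ N v, G.Adj v a := fun v a ha =>
    (G.mem_neighborFinset v a).1 (hNsub v ha)
  calc minDeg G * threePackNum G = (starEdges P N).card := by
        rw [card_starEdges hP.isIndepSet hN, Finset.sum_congr rfl fun v _ => hNcard v,
          Finset.sum_const, smul_eq_mul, hPcard, mul_comm]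
    _ ≤ eopNum G :=
      (isEOPSet_starEdges (cliqueFree_three_of_bool_coloring hc) hP hN).card_le_eopNum
end
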